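/- Assume the resonance hypotheses: sup_{ℓ≥1} ℓ|a_ℓ| < ∞, and there are a > 0 and l, m ∈ ℕ≥1 with m < l and l ≠ 2m such that a_l = a_m = a_{l+m} = a and a_j < a for all j ∉ {l, m, l+m}. Then there exist η > 0, δ > 0 and C > 0 such that for every κ with |κ − 2/a| ≤ δ and every x ∈ ℓ²_w with ‖x‖_w ≤ η solving the stationary Fourier system at κ: |(2 − κa) x_l − κ a x_m x_{l+m}| ≤ C ‖x‖_w³, |(2 − κa) x_m − κ a x_l x_{l+m}| ≤ C ‖x‖_w³, and |(2 − κa) x_{l+m} − κ a x_l x_m| ≤ C ‖x‖_w³. -/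

import Mathlib

open scoped BigOperators
open Filter Topology Real

noncomputable section

/-- `x` solves the stationary Fourier system at intensity `κ` for coefficients `a`:
for every `ℓ ≥ 1` the tail series converges absolutely (equivalently, is `Summable` in `ℝ`) and
`ℓ(2 − κ a_ℓ) x_ℓ = κ ∑_{j=1}^{ℓ−1} j a_j x_j x_{ℓ−j}
  + κ ∑_{j=ℓ+1}^∞ (j a_j − (j−ℓ) a_{j−ℓ}) x_j x_{j−ℓ}`,
where the infinite sum is indexed by `j = ℓ + k + 1`, `k : ℕ`. -/
def SolvesMV (a : ℕ → ℝ) (κ : ℝ) (x : ℕ → ℝ) : Prop :=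
  ∀ ℓ : ℕ, 1 ≤ ℓ →
    Summable (fun k : ℕ =>
      (((ℓ + k + 1 : ℕ) : ℝ) * a (ℓ + k + 1) - ((k + 1 : ℕ) : ℝ) * a (k + 1))
        * x (ℓ + k + 1) * x (k + 1)) ∧
    (ℓ : ℝ) * (2 - κ * a ℓ) * x ℓ
      = κ * ∑ j ∈ Finset.Ico 1 ℓ, (j : ℝ) * a j * x j * x (ℓ - j)
        + κ * ∑' k : ℕ,
            (((ℓ + k + 1 : ℕ) : ℝ) * a (ℓ + k + 1) - ((k + 1 : ℕ) : ℝ) * a (k + 1))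
              * x (ℓ + k + 1) * x (k + 1)

/-- The squared weighted norm `∑_{ℓ≥1} (1+ℓ²) x_ℓ²`. -/
def wnormSq (x : ℕ → ℝ) : ℝ := ∑' ℓ : ℕ, (1 + ((ℓ + 1 : ℕ) : ℝ) ^ 2) * x (ℓ + 1) ^ 2

/-- The weighted norm `‖x‖_w = (∑_{ℓ≥1} (1+ℓ²) x_ℓ²)^{1/2}`. -/
def wnorm (x : ℕ → ℝ) : ℝ := Real.sqrt (wnormSq x)

/-- Membership in the weighted space `ℓ²_w`. -/
def MemL2w (x : ℕ → ℝ) : Prop :=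
  Summable fun ℓ : ℕ => (1 + ((ℓ + 1 : ℕ) : ℝ) ^ 2) * x (ℓ + 1) ^ 2

/-!
Off the resonant set `{l, m, l + m}` the factor `2 - κ a_j` stays above a uniform gap: `j a_j` is
bounded, so `a_j ≤ a / 2` for large `j`, and each of the finitely many remaining `a_j` is `< a`.
Since `j |x_j| ≤ ‖x‖_w`, every product in the `j`-th equation is at most `‖x‖_w² / (p q)`, and
`∑ 1 / (p q)` over the convolution pairs is controlled by `ζ(2) = π² / 6`; hence off-resonant
modes satisfy `j |x_j| = O(‖x‖_w²)`. In the equations for `l`, `m` and `l + m` the only products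
of two resonant modes are `x_m x_{l+m}`, `x_l x_{l+m}` and `x_l x_m` (as `l ≠ 2m`, no `x_m²` occurs
in the equation for `l`); every other product has an off-resonant factor and is
`O(‖x‖_w³ / (p q))`, so the remainder is `O(‖x‖_w³)`.
-/

open Finset

def convTerm (a x : ℕ → ℝ) (L i : ℕ) : ℝ := (i : ℝ) * a i * x i * x (L - i)

def tailTerm (a x : ℕ → ℝ) (L k : ℕ) : ℝ :=
  (((L + k + 1 : ℕ) : ℝ) * a (L + k + 1) - ((k + 1 : ℕ) : ℝ) * a (k + 1))
    * x (L + k + 1) * x (k + 1)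

theorem one_div_mul_le (u v : ℝ) : 1 / (u * v) ≤ (1 / u ^ 2 + 1 / v ^ 2) / 2 := by
  rw [← one_div_mul_one_div, ← one_div_pow, ← one_div_pow]
  linarith [two_mul_le_add_sq (1 / u) (1 / v)]

theorem hasSum_one_div_succ_sq : HasSum (fun k : ℕ => 1 / ((k + 1 : ℕ) : ℝ) ^ 2) (π ^ 2 / 6) := by
  simpa using (hasSum_nat_add_iff' 1).mpr hasSum_zeta_two

theorem sum_one_div_sq_le (s : Finset ℕ) : ∑ i ∈ s, 1 / (i : ℝ) ^ 2 ≤ π ^ 2 / 6 :=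
  sum_le_hasSum s (fun _ _ => by positivity) hasSum_zeta_two

theorem abs_le_of_abs_natCast_mul_le {L : ℕ} {y B : ℝ} (hL : 1 ≤ L) (h : |(L : ℝ) * y| ≤ B) :
    |y| ≤ B := by
  rw [abs_mul, Nat.abs_cast] at h
  exact (le_mul_of_one_le_left (abs_nonneg y) (by exact_mod_cast hL)).trans h

theorem le_two_sub_mul_of_abs_sub_le {A ε κ : ℝ} (hA : 0 < A) (hε : 0 < ε)
    (hκ : |κ - 2 / A| ≤ min (1 / A) (ε / (2 * A ^ 2))) :
    0 ≤ κ ∧ κ ≤ 3 / A ∧ ∀ b ≤ A - ε, ε / (2 * A) ≤ 2 - κ * b := by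
  obtain ⟨hlo, hhi⟩ := abs_le.1 hκ
  have h₁ := min_le_left (1 / A) (ε / (2 * A ^ 2))
  have h₂ := min_le_right (1 / A) (ε / (2 * A ^ 2))
  have hκA : 1 ≤ κ * A := by
    have : 1 / A ≤ κ := by linarith [show 2 / A - 1 / A = 1 / A by ring]
    rwa [div_le_iff₀ hA] at this
  have hκA' : κ * A ≤ 2 + ε / (2 * A) := by
    have : κ ≤ 2 / A + ε / (2 * A ^ 2) := by linarith
    calc κ * A ≤ (2 / A + ε / (2 * A ^ 2)) * A := by gcongr
      _ = 2 + ε / (2 * A) := by field_simp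
  have hκ0 : 0 ≤ κ := by nlinarith
  refine ⟨hκ0, by linarith [show 2 / A + 1 / A = 3 / A by ring], fun b hb => ?_⟩
  have hεκ : ε / A ≤ κ * ε := by
    rw [div_le_iff₀ hA]; nlinarith
  calc ε / (2 * A) = 2 - (2 + ε / (2 * A)) + ε / A := by field_simp; ring
    _ ≤ 2 - κ * A + κ * ε := by linarith
    _ = 2 - κ * (A - ε) := by ring
    _ ≤ 2 - κ * b := by nlinarith

section Estimates

variable {a x : ℕ → ℝ} {κ Ca D : ℝ}

theorem tendsto_zero_of_natCast_mul_abs_le {C : ℝ} (h : ∀ j : ℕ, 1 ≤ j → (j : ℝ) * |a j| ≤ C) :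
    Tendsto a atTop (𝓝 0) := by
  refine squeeze_zero_norm' ?_ (tendsto_const_div_atTop_nhds_zero_nat C)
  filter_upwards [eventually_ge_atTop 1] with j hj
  rw [Real.norm_eq_abs, le_div_iff₀ (by exact_mod_cast hj), mul_comm]
  exact h j hj

theorem exists_pos_le_sub_of_tendsto_zero (ha : Tendsto a atTop (𝓝 0)) {A : ℝ} (hA : 0 < A)
    {S : Set ℕ} (hS : ∀ j ∈ S, a j < A) : ∃ ε > 0, ∀ j ∈ S, ε ≤ A - a j := by
  classical
  obtain ⟨N, hN⟩ := eventually_atTop.1 (ha.eventually (gt_mem_nhds (half_pos hA)))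
  -- beyond `N` the gap is at least `A / 2`; below `N` only finitely many gaps occur
  set T := insert (A / 2) (((range N).filter (· ∈ S)).image (A - a ·))
  refine ⟨T.min' (insert_nonempty _ _), (lt_min'_iff _ _).2 fun y hy => ?_, fun j hj => ?_⟩
  · obtain rfl | hy := mem_insert.1 hy
    · exact half_pos hA
    · obtain ⟨j, hj, rfl⟩ := mem_image.1 hy
      exact sub_pos.2 (hS j (mem_filter.1 hj).2)
  · by_cases hjN : j < N
    · exact T.min'_le _ (mem_insert_of_mem (mem_image_of_mem _ (by simp [hjN, hj])))
    · exact (T.min'_le _ (mem_insert_self _ _)).trans (by linarith [hN j (not_lt.1 hjN)])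

theorem wnorm_nonneg (x : ℕ → ℝ) : 0 ≤ wnorm x := Real.sqrt_nonneg _

theorem natCast_mul_abs_le_wnorm (hx : MemL2w x) (j : ℕ) : (j : ℝ) * |x j| ≤ wnorm x := by
  rcases j with _ | j
  · rw [Nat.cast_zero, zero_mul]
    exact wnorm_nonneg x
  · have hj : (1 + ((j + 1 : ℕ) : ℝ) ^ 2) * x (j + 1) ^ 2 ≤ wnormSq x :=
      hx.le_tsum j fun _ _ => by positivity
    rw [← Nat.abs_cast, ← abs_mul]
    exact Real.abs_le_sqrt (by nlinarith [sq_nonneg (x (j + 1))])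

theorem abs_mul_le_div_of_natCast_mul_abs_le {p q : ℕ} {A B : ℝ} (hp : 1 ≤ p) (hq : 1 ≤ q)
    (hA : (p : ℝ) * |x p| ≤ A) (hB : (q : ℝ) * |x q| ≤ B) :
    |x p * x q| ≤ A * B / ((p : ℝ) * q) := by
  have hp' : (0 : ℝ) < p := by exact_mod_cast hp
  have hq' : (0 : ℝ) < q := by exact_mod_cast hq
  rw [le_div_iff₀ (by positivity), abs_mul]
  calc |x p| * |x q| * (p * q) = (p * |x p|) * (q * |x q|) := by ring
    _ ≤ A * B := mul_le_mul hA hB (by positivity) ((mul_nonneg hp'.le (abs_nonneg _)).trans hA)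

theorem abs_sum_convTerm_le (hCa : ∀ j : ℕ, 1 ≤ j → |(j : ℝ) * a j| ≤ Ca) (hD : 0 ≤ D) {L : ℕ}
    {s : Finset ℕ} (hs : s ⊆ Ico 1 L)
    (h : ∀ i ∈ s, |x i * x (L - i)| ≤ D / ((i : ℝ) * (L - i : ℕ))) :
    |∑ i ∈ s, convTerm a x L i| ≤ Ca * D * (π ^ 2 / 6) := by
  have hCa0 : 0 ≤ Ca := (abs_nonneg _).trans (hCa 1 le_rfl)
  have hterm : ∀ i ∈ s, |convTerm a x L i|
      ≤ Ca * D / 2 * (1 / (i : ℝ) ^ 2 + 1 / ((L - i : ℕ) : ℝ) ^ 2) := by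
    intro i hi
    rw [convTerm, mul_assoc _ (x i), abs_mul]
    calc |(i : ℝ) * a i| * |x i * x (L - i)| ≤ Ca * (D / ((i : ℝ) * (L - i : ℕ))) :=
          mul_le_mul (hCa i (mem_Ico.1 (hs hi)).1) (h i hi) (abs_nonneg _) hCa0
      _ = Ca * D * (1 / ((i : ℝ) * (L - i : ℕ))) := by ring
      _ ≤ Ca * D * ((1 / (i : ℝ) ^ 2 + 1 / ((L - i : ℕ) : ℝ) ^ 2) / 2) :=
          mul_le_mul_of_nonneg_left (one_div_mul_le _ _) (by positivity)
      _ = _ := by ring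
  -- `i ↦ L - i` is injective on `s`, so the reflected weights are again distinct `1 / n ^ 2`.
  have hrefl : ∑ i ∈ s, 1 / ((L - i : ℕ) : ℝ) ^ 2 ≤ π ^ 2 / 6 := by
    rw [← sum_image (f := fun n : ℕ => 1 / (n : ℝ) ^ 2) (g := (L - ·)) fun i hi j hj hij => by
      have := mem_Ico.1 (hs hi); have := mem_Ico.1 (hs hj); simp only at hij; omega]
    exact sum_one_div_sq_le _
  calc |∑ i ∈ s, convTerm a x L i| ≤ ∑ i ∈ s, |convTerm a x L i| := abs_sum_le_sum_abs _ _
    _ ≤ ∑ i ∈ s, Ca * D / 2 * (1 / (i : ℝ) ^ 2 + 1 / ((L - i : ℕ) : ℝ) ^ 2) := sum_le_sum hterm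
    _ = Ca * D / 2 * (∑ i ∈ s, 1 / (i : ℝ) ^ 2 + ∑ i ∈ s, 1 / ((L - i : ℕ) : ℝ) ^ 2) := by
        rw [← mul_sum, sum_add_distrib]
    _ ≤ Ca * D / 2 * (π ^ 2 / 6 + π ^ 2 / 6) := by gcongr; exact sum_one_div_sq_le s
    _ = Ca * D * (π ^ 2 / 6) := by ring

theorem abs_tailTerm_le (hCa : ∀ j : ℕ, 1 ≤ j → |(j : ℝ) * a j| ≤ Ca) (hD : 0 ≤ D) {L k : ℕ}
    (h : |x (L + k + 1) * x (k + 1)| ≤ D / (((L + k + 1 : ℕ) : ℝ) * ((k + 1 : ℕ) : ℝ))) :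
    |tailTerm a x L k| ≤ 2 * Ca * D * (1 / ((k + 1 : ℕ) : ℝ) ^ 2) := by
  have hcoef : |((L + k + 1 : ℕ) : ℝ) * a (L + k + 1) - ((k + 1 : ℕ) : ℝ) * a (k + 1)| ≤ 2 * Ca :=
    (abs_sub _ _).trans (by linarith [hCa (L + k + 1) (by omega), hCa (k + 1) (by omega)])
  have hmono :
      D / (((L + k + 1 : ℕ) : ℝ) * ((k + 1 : ℕ) : ℝ)) ≤ D * (1 / ((k + 1 : ℕ) : ℝ) ^ 2) := by
    rw [mul_one_div, sq]
    gcongr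
    linarith [(Nat.cast_nonneg L : (0 : ℝ) ≤ L)]
  rw [tailTerm, mul_assoc _ (x (L + k + 1)), abs_mul]
  calc _ ≤ 2 * Ca * (D / (((L + k + 1 : ℕ) : ℝ) * ((k + 1 : ℕ) : ℝ))) :=
        mul_le_mul hcoef h (abs_nonneg _) ((abs_nonneg _).trans hcoef)
    _ ≤ 2 * Ca * (D * (1 / ((k + 1 : ℕ) : ℝ) ^ 2)) :=
        mul_le_mul_of_nonneg_left hmono ((abs_nonneg _).trans hcoef)
    _ = _ := by ring

theorem abs_tsum_indicator_tailTerm_le (hCa : ∀ j : ℕ, 1 ≤ j → |(j : ℝ) * a j| ≤ Ca) (hD : 0 ≤ D)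
    {L : ℕ} (F : Finset ℕ)
    (h : ∀ k ∉ F, |x (L + k + 1) * x (k + 1)| ≤ D / (((L + k + 1 : ℕ) : ℝ) * ((k + 1 : ℕ) : ℝ))) :
    |∑' k, (↑F : Set ℕ)ᶜ.indicator (tailTerm a x L) k| ≤ 2 * Ca * D * (π ^ 2 / 6) := by
  rw [← Real.norm_eq_abs]
  refine tsum_of_norm_bounded (hasSum_one_div_succ_sq.mul_left (2 * Ca * D)) fun k => ?_
  rw [Real.norm_eq_abs]
  by_cases hk : k ∈ F
  · rw [Set.indicator_of_notMem (by simpa using hk), abs_zero]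
    have := (abs_nonneg _).trans (hCa 1 le_rfl)
    positivity
  · rw [Set.indicator_of_mem (by simpa using hk)]
    exact abs_tailTerm_le hCa hD (h k hk)

theorem SolvesMV.abs_sub_le (hsol : SolvesMV a κ x) (hκ : 0 ≤ κ)
    (hCa : ∀ j : ℕ, 1 ≤ j → |(j : ℝ) * a j| ≤ Ca) (hD : 0 ≤ D) {L : ℕ} (hL : 1 ≤ L)
    {E : Finset ℕ} (hE : E ⊆ Ico 1 L) (F : Finset ℕ)
    (hconv : ∀ i ∈ Ico 1 L, i ∉ E → |x i * x (L - i)| ≤ D / ((i : ℝ) * (L - i : ℕ)))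
    (htail : ∀ k ∉ F,
      |x (L + k + 1) * x (k + 1)| ≤ D / (((L + k + 1 : ℕ) : ℝ) * ((k + 1 : ℕ) : ℝ))) :
    |(L : ℝ) * (2 - κ * a L) * x L
        - κ * (∑ i ∈ E, convTerm a x L i + ∑ k ∈ F, tailTerm a x L k)|
      ≤ κ * (Ca * D * (π ^ 2 / 2)) := by
  have hsum : Summable (tailTerm a x L) := (hsol L hL).1
  have heq : (L : ℝ) * (2 - κ * a L) * x L
      = κ * ∑ i ∈ Ico 1 L, convTerm a x L i + κ * ∑' k, tailTerm a x L k := (hsol L hL).2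
  have hconv' : |∑ i ∈ Ico 1 L \ E, convTerm a x L i| ≤ Ca * D * (π ^ 2 / 6) :=
    abs_sum_convTerm_le hCa hD sdiff_subset fun i hi =>
      hconv i (mem_sdiff.1 hi).1 (mem_sdiff.1 hi).2
  have htail' := abs_tsum_indicator_tailTerm_le hCa hD F htail
  rw [heq, ← sum_sdiff hE, ← hsum.sum_add_tsum_compl (s := F), _root_.tsum_subtype,
    show ∀ u v w z : ℝ, κ * (u + v) + κ * (w + z) - κ * (v + w) = κ * (u + z) by intros; ring,
    abs_mul, abs_of_nonneg hκ]
  gcongr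
  linarith [abs_add_le (∑ i ∈ Ico 1 L \ E, convTerm a x L i)
    (∑' k, (↑F : Set ℕ)ᶜ.indicator (tailTerm a x L) k)]

theorem SolvesMV.natCast_mul_abs_le_of_le_two_sub (hsol : SolvesMV a κ x) (hx : MemL2w x)
    (hκ : 0 ≤ κ) (hCa : ∀ j : ℕ, 1 ≤ j → |(j : ℝ) * a j| ≤ Ca) {c : ℝ} (hc : 0 < c) {j : ℕ}
    (hj : 1 ≤ j) (hgap : c ≤ 2 - κ * a j) :
    (j : ℝ) * |x j| ≤ κ * Ca * (π ^ 2 / 2) / c * wnorm x ^ 2 := by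
  have hprod : ∀ p q : ℕ, 1 ≤ p → 1 ≤ q → |x p * x q| ≤ wnorm x ^ 2 / ((p : ℝ) * q) :=
    fun p q hp hq => by
      simpa only [sq] using abs_mul_le_div_of_natCast_mul_abs_le hp hq
        (natCast_mul_abs_le_wnorm hx p) (natCast_mul_abs_le_wnorm hx q)
  have h := hsol.abs_sub_le hκ hCa (sq_nonneg (wnorm x)) hj (empty_subset _) ∅
    (fun i hi _ => by have := mem_Ico.1 hi; exact hprod _ _ this.1 (by omega))
    (fun k _ => hprod _ _ (by omega) (by omega))
  rw [sum_empty, sum_empty, add_zero, mul_zero, sub_zero, abs_mul, abs_mul, Nat.abs_cast,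
    abs_of_pos (hc.trans_le hgap)] at h
  rw [div_mul_eq_mul_div, le_div_iff₀ hc]
  calc (j : ℝ) * |x j| * c ≤ (j : ℝ) * (2 - κ * a j) * |x j| := by
        rw [mul_right_comm]; gcongr
    _ ≤ κ * (Ca * wnorm x ^ 2 * (π ^ 2 / 2)) := h
    _ = κ * Ca * (π ^ 2 / 2) * wnorm x ^ 2 := by ring

theorem abs_mul_le_of_notMem (hx : MemL2w x) {R : Set ℕ} {M : ℝ}
    (hM : ∀ j, 1 ≤ j → j ∉ R → (j : ℝ) * |x j| ≤ M * wnorm x ^ 2) {p q : ℕ} (hp : 1 ≤ p)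
    (hq : 1 ≤ q) (hpq : p ∉ R ∨ q ∉ R) :
    |x p * x q| ≤ M * wnorm x ^ 3 / ((p : ℝ) * q) := by
  rcases hpq with hpR | hqR
  · simpa only [pow_succ, mul_assoc] using
      abs_mul_le_div_of_natCast_mul_abs_le hp hq (hM p hp hpR) (natCast_mul_abs_le_wnorm hx q)
  · simpa only [pow_succ, mul_comm, mul_assoc, mul_left_comm] using
      abs_mul_le_div_of_natCast_mul_abs_le hp hq (natCast_mul_abs_le_wnorm hx p) (hM q hq hqR)

theorem SolvesMV.abs_sub_le_of_notMem (hsol : SolvesMV a κ x) (hx : MemL2w x) (hκ : 0 ≤ κ)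
    (hCa : ∀ j : ℕ, 1 ≤ j → |(j : ℝ) * a j| ≤ Ca) {R : Set ℕ} {M : ℝ} (hM0 : 0 ≤ M)
    (hM : ∀ j, 1 ≤ j → j ∉ R → (j : ℝ) * |x j| ≤ M * wnorm x ^ 2) {L : ℕ} (hL : 1 ≤ L)
    {E : Finset ℕ} (hE : E ⊆ Ico 1 L) (F : Finset ℕ)
    (hconv : ∀ i ∈ Ico 1 L, i ∉ E → i ∉ R ∨ L - i ∉ R)
    (htail : ∀ k ∉ F, L + k + 1 ∉ R ∨ k + 1 ∉ R) :
    |(L : ℝ) * (2 - κ * a L) * x L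
        - κ * (∑ i ∈ E, convTerm a x L i + ∑ k ∈ F, tailTerm a x L k)|
      ≤ κ * (Ca * (M * wnorm x ^ 3) * (π ^ 2 / 2)) :=
  hsol.abs_sub_le hκ hCa (mul_nonneg hM0 (pow_nonneg (wnorm_nonneg x) 3)) hL hE F
    (fun i hi hiE => abs_mul_le_of_notMem hx hM (mem_Ico.1 hi).1
      (by have := mem_Ico.1 hi; omega) (hconv i hi hiE))
    (fun k hk => abs_mul_le_of_notMem hx hM (by omega) (by omega) (htail k hk))

section Resonance

variable {l m : ℕ} {aval M : ℝ}

theorem SolvesMV.abs_reducedEq_l_le (hsol : SolvesMV a κ x) (hx : MemL2w x) (hκ : 0 ≤ κ)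
    (hCa : ∀ j : ℕ, 1 ≤ j → |(j : ℝ) * a j| ≤ Ca) (hM0 : 0 ≤ M)
    (hM : ∀ j, 1 ≤ j → j ∉ ({l, m, l + m} : Set ℕ) → (j : ℝ) * |x j| ≤ M * wnorm x ^ 2)
    (hm : 1 ≤ m) (hml : m < l) (hl2m : l ≠ 2 * m)
    (hal : a l = aval) (ham : a m = aval) (halm : a (l + m) = aval) :
    |(2 - κ * aval) * x l - κ * aval * x m * x (l + m)|
      ≤ κ * (Ca * (M * wnorm x ^ 3) * (π ^ 2 / 2)) := by
  have h := hsol.abs_sub_le_of_notMem hx hκ hCa hM0 hM (by omega : 1 ≤ l) (empty_subset _)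
    {m - 1}
    (fun i hi _ => by
      simp only [Set.mem_insert_iff, Set.mem_singleton_iff]; have := mem_Ico.1 hi; omega)
    (fun k hk => by
      simp only [mem_singleton] at hk; simp only [Set.mem_insert_iff, Set.mem_singleton_iff]; omega)
  rw [sum_empty, zero_add, sum_singleton, tailTerm, show l + (m - 1) + 1 = l + m by omega,
    show m - 1 + 1 = m by omega, hal, halm, ham,
    show (l : ℝ) * (2 - κ * aval) * x l
        - κ * ((((l + m : ℕ) : ℝ) * aval - (m : ℝ) * aval) * x (l + m) * x m)
      = l * ((2 - κ * aval) * x l - κ * aval * x m * x (l + m)) by push_cast; ring] at h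
  exact abs_le_of_abs_natCast_mul_le (by omega) h

theorem SolvesMV.abs_reducedEq_m_le (hsol : SolvesMV a κ x) (hx : MemL2w x) (hκ : 0 ≤ κ)
    (hCa : ∀ j : ℕ, 1 ≤ j → |(j : ℝ) * a j| ≤ Ca) (hM0 : 0 ≤ M)
    (hM : ∀ j, 1 ≤ j → j ∉ ({l, m, l + m} : Set ℕ) → (j : ℝ) * |x j| ≤ M * wnorm x ^ 2)
    (hm : 1 ≤ m) (hml : m < l) (hl2m : l ≠ 2 * m)
    (hal : a l = aval) (ham : a m = aval) (halm : a (l + m) = aval) :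
    |(2 - κ * aval) * x m - κ * aval * x l * x (l + m)|
      ≤ κ * (Ca * (M * wnorm x ^ 3) * (π ^ 2 / 2)) := by
  have h := hsol.abs_sub_le_of_notMem hx hκ hCa hM0 hM hm (empty_subset _) {l - 1}
    (fun i hi _ => by
      simp only [Set.mem_insert_iff, Set.mem_singleton_iff]; have := mem_Ico.1 hi; omega)
    (fun k hk => by
      simp only [mem_singleton] at hk; simp only [Set.mem_insert_iff, Set.mem_singleton_iff]; omega)
  rw [sum_empty, zero_add, sum_singleton, tailTerm, show m + (l - 1) + 1 = l + m by omega,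
    show l - 1 + 1 = l by omega, ham, halm, hal,
    show (m : ℝ) * (2 - κ * aval) * x m
        - κ * ((((l + m : ℕ) : ℝ) * aval - (l : ℝ) * aval) * x (l + m) * x l)
      = m * ((2 - κ * aval) * x m - κ * aval * x l * x (l + m)) by push_cast; ring] at h
  exact abs_le_of_abs_natCast_mul_le hm h

theorem SolvesMV.abs_reducedEq_add_le (hsol : SolvesMV a κ x) (hx : MemL2w x) (hκ : 0 ≤ κ)
    (hCa : ∀ j : ℕ, 1 ≤ j → |(j : ℝ) * a j| ≤ Ca) (hM0 : 0 ≤ M)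
    (hM : ∀ j, 1 ≤ j → j ∉ ({l, m, l + m} : Set ℕ) → (j : ℝ) * |x j| ≤ M * wnorm x ^ 2)
    (hm : 1 ≤ m) (hml : m < l)
    (hal : a l = aval) (ham : a m = aval) (halm : a (l + m) = aval) :
    |(2 - κ * aval) * x (l + m) - κ * aval * x l * x m|
      ≤ κ * (Ca * (M * wnorm x ^ 3) * (π ^ 2 / 2)) := by
  have hE : ({m, l} : Finset ℕ) ⊆ Ico 1 (l + m) := by
    intro i hi
    simp only [mem_insert, mem_singleton] at hi
    rw [mem_Ico]
    omega
  have h := hsol.abs_sub_le_of_notMem hx hκ hCa hM0 hM (by omega : 1 ≤ l + m) hE ∅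
    (fun i hi hiE => by
      simp only [mem_insert, mem_singleton] at hiE
      simp only [Set.mem_insert_iff, Set.mem_singleton_iff]; have := mem_Ico.1 hi; omega)
    (fun k _ => by simp only [Set.mem_insert_iff, Set.mem_singleton_iff]; omega)
  rw [sum_empty, add_zero, sum_pair (by omega), convTerm, convTerm,
    show l + m - m = l by omega, show l + m - l = m by omega, ham, hal, halm,
    show ((l + m : ℕ) : ℝ) * (2 - κ * aval) * x (l + m)
        - κ * ((m : ℝ) * aval * x m * x l + (l : ℝ) * aval * x l * x m)
      = ((l + m : ℕ) : ℝ) * ((2 - κ * aval) * x (l + m) - κ * aval * x l * x m) by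
      push_cast; ring] at h
  exact abs_le_of_abs_natCast_mul_le (by omega) h

end Resonance

end Estimates

/-- the reduced Lyapunov–Schmidt equations in the resonance case
`a_l = a_m = a_{l+m} = a` (with `m < l`, `l ≠ 2m`): for small solutions near `κ = 2/a`,
the three dominant modes satisfy the quadratic relations up to `O(‖x‖_w³)`. -/
theorem reduced_LS_resonance
    (a : ℕ → ℝ) (hA : ∃ C : ℝ, ∀ ℓ : ℕ, 1 ≤ ℓ → (ℓ : ℝ) * |a ℓ| ≤ C)
    (aval : ℝ) (hav : 0 < aval)
    (l m : ℕ) (hm : 1 ≤ m) (hml : m < l) (hl2m : l ≠ 2 * m)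
    (hal : a l = aval) (ham : a m = aval) (halm : a (l + m) = aval)
    (hout : ∀ j : ℕ, 1 ≤ j → j ≠ l → j ≠ m → j ≠ l + m → a j < aval) :
    ∃ η : ℝ, 0 < η ∧ ∃ δ : ℝ, 0 < δ ∧ ∃ C : ℝ, 0 < C ∧
      ∀ κ : ℝ, |κ - 2 / aval| ≤ δ →
        ∀ x : ℕ → ℝ, MemL2w x → wnorm x ≤ η → SolvesMV a κ x →
          |(2 - κ * aval) * x l - κ * aval * x m * x (l + m)| ≤ C * wnorm x ^ 3 ∧
          |(2 - κ * aval) * x m - κ * aval * x l * x (l + m)| ≤ C * wnorm x ^ 3 ∧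
          |(2 - κ * aval) * x (l + m) - κ * aval * x l * x m| ≤ C * wnorm x ^ 3 := by
  obtain ⟨C₀, hC₀⟩ := hA
  set Ca := max C₀ 1
  have hCa : ∀ j : ℕ, 1 ≤ j → |(j : ℝ) * a j| ≤ Ca := fun j hj => by
    rw [abs_mul, Nat.abs_cast]; exact (hC₀ j hj).trans (le_max_left _ _)
  obtain ⟨ε, hε, hgap⟩ := exists_pos_le_sub_of_tendsto_zero
    (tendsto_zero_of_natCast_mul_abs_le hC₀) hav
    (S := {j | 1 ≤ j ∧ j ∉ ({l, m, l + m} : Set ℕ)}) fun j ⟨hj, hjR⟩ => by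
      simp only [Set.mem_insert_iff, Set.mem_singleton_iff, not_or] at hjR
      exact hout j hj hjR.1 hjR.2.1 hjR.2.2
  set M := 3 / aval * Ca * (π ^ 2 / 2) / (ε / (2 * aval)) with hM_def
  refine ⟨1, one_pos, min (1 / aval) (ε / (2 * aval ^ 2)), by positivity,
    3 / aval * Ca * M * (π ^ 2 / 2), by positivity, fun κ hκ x hx _ hsol => ?_⟩
  obtain ⟨hκ₀, hκ₃, hκgap⟩ := le_two_sub_mul_of_abs_sub_le hav hε hκ
  have hM : ∀ j, 1 ≤ j → j ∉ ({l, m, l + m} : Set ℕ) → (j : ℝ) * |x j| ≤ M * wnorm x ^ 2 :=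
    fun j hj hjR => (hsol.natCast_mul_abs_le_of_le_two_sub hx hκ₀ hCa (by positivity) hj
      (hκgap _ (by linarith [hgap j ⟨hj, hjR⟩]))).trans (by rw [hM_def]; gcongr)
  have hB : κ * (Ca * (M * wnorm x ^ 3) * (π ^ 2 / 2))
      ≤ 3 / aval * Ca * M * (π ^ 2 / 2) * wnorm x ^ 3 := by
    have := wnorm_nonneg x
    calc _ = κ * (Ca * M * (π ^ 2 / 2) * wnorm x ^ 3) := by ring
      _ ≤ 3 / aval * (Ca * M * (π ^ 2 / 2) * wnorm x ^ 3) := by gcongr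
      _ = _ := by ring
  have hM0 : 0 ≤ M := by positivity
  exact ⟨(hsol.abs_reducedEq_l_le hx hκ₀ hCa hM0 hM hm hml hl2m hal ham halm).trans hB,
    (hsol.abs_reducedEq_m_le hx hκ₀ hCa hM0 hM hm hml hl2m hal ham halm).trans hB,
    (hsol.abs_reducedEq_add_le hx hκ₀ hCa hM0 hM hm hml hal ham halm).trans hB⟩
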